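/- Let G be a finite connected graph on n ≥ 2 vertices and r > 1. The expected absorption time τ of the Moran process on G satisfies E[τ] ≤ (r/(r−1))·n³·φ(G) ≤ (r/(r−1))·n⁴, where φ(G) = ∑_{x∈V} 1/deg(x). -/

import Mathlib

open Finset

/-- Total fitness of the population when the mutant set is `S`:
`W(S) = r·|S| + (n - |S|) = n + (r-1)·|S|`. -/
noncomputable def moranW {V : Type*} [Fintype V] (r : ℝ) (S : Finset V) : ℝ :=
  r * S.card + ((Fintype.card V : ℝ) - S.card)

/-- One-step transition probability of the Moran process on the graph `G` with mutant
fitness `r`: an individual `x` is chosen with probability proportional to its fitness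
(`r` if `x ∈ S`, else `1`), and it reproduces onto a uniformly random neighbour `y`,
which becomes a mutant if `x` is a mutant and a non-mutant otherwise. -/
noncomputable def moranP {V : Type*} [Fintype V] [DecidableEq V] (G : SimpleGraph V)
    [DecidableRel G.Adj] (r : ℝ) (S T : Finset V) : ℝ :=
  ∑ x : V, ∑ y ∈ G.neighborFinset x,
    (if x ∈ S then r else 1) / (moranW r S * G.degree x) *
      (if (if x ∈ S then insert y S else S.erase y) = T then 1 else 0)

/-- The potential function `φ(X) = ∑_{x ∈ X} 1/deg x`. -/
noncomputable def moranPhi {V : Type*} [Fintype V] (G : SimpleGraph V) [DecidableRel G.Adj]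
    (X : Finset V) : ℝ :=
  ∑ x ∈ X, (1 : ℝ) / G.degree x

/-!
The potential `φ(S) = ∑_{x ∈ S} 1/deg x` of the mutant set increases in expectation by more
than `k = (r-1)/(r n³)` at every non-absorbing step: an edge `xy` with `x ∈ S`, `y ∉ S`
contributes `r/(W deg x deg y)` through `x` reproducing onto `y` and `-1/(W deg x deg y)` through
`y` reproducing onto `x`; a boundary edge exists because `G` is connected, and `W < r n`,
`deg < n`. Since `φ ≤ φ(V)`, a maximum principle for the one-step recursion of the expected
absorption time `h` then gives `h(S) ≤ (φ(V) - φ(S))/k`.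
-/

theorem le_div_of_drift {σ : Type*} [Fintype σ] {P : σ → σ → ℝ} {A : σ → Prop}
    {h ψ : σ → ℝ} {k : ℝ} (hk : 0 < k)
    (hP : ∀ s, ¬ A s → ∀ t, 0 ≤ P s t) (hrow : ∀ s, ¬ A s → ∑ t, P s t = 1)
    (hA : ∀ s, A s → h s ≤ ψ s / k)
    (hrec : ∀ s, ¬ A s → h s = 1 + ∑ t, P s t * h t)
    (hdrift : ∀ s, ¬ A s → ∑ t, P s t * ψ t < ψ s - k) (s : σ) :
    h s ≤ ψ s / k := by
  have : Nonempty σ := ⟨s⟩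
  obtain ⟨M, hM⟩ := Finite.exists_max fun s => h s - ψ s / k
  suffices h M - ψ M / k ≤ 0 by linarith [hM s]
  by_cases hAM : A M
  · linarith [hA M hAM]
  have hmean : ∑ t, P M t * (h t - ψ t / k) ≤ h M - ψ M / k :=
    calc ∑ t, P M t * (h t - ψ t / k) ≤ ∑ t, P M t * (h M - ψ M / k) :=
          sum_le_sum fun t _ => mul_le_mul_of_nonneg_left (hM t) (hP M hAM t)
      _ = h M - ψ M / k := by rw [← sum_mul, hrow M hAM, one_mul]
  have hsplit :
      ∑ t, P M t * (h t - ψ t / k) = ∑ t, P M t * h t - (∑ t, P M t * ψ t) / k := by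
    simp only [mul_sub, sum_sub_distrib, sum_div, mul_div_assoc]
  have hdrift' : (∑ t, P M t * ψ t) / k < ψ M / k - 1 := by
    rw [← div_self hk.ne', div_sub_div_same]
    exact div_lt_div_of_pos_right (hdrift M hAM) hk
  linarith [hrec M hAM]

section Moran

variable {V : Type*} [Fintype V]

theorem moranW_eq (r : ℝ) (S : Finset V) :
    moranW r S = Fintype.card V + (r - 1) * S.card := by
  unfold moranW; ring

theorem moranW_nonneg {r : ℝ} (hr : 0 ≤ r) (S : Finset V) : 0 ≤ moranW r S := by
  have : (S.card : ℝ) ≤ Fintype.card V := by exact_mod_cast card_le_univ S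
  unfold moranW; nlinarith [(S.card.cast_nonneg : (0 : ℝ) ≤ S.card)]

theorem moranW_pos [Nonempty V] {r : ℝ} (hr : 1 ≤ r) (S : Finset V) : 0 < moranW r S := by
  rw [moranW_eq]
  have : (0 : ℝ) < Fintype.card V := by exact_mod_cast Fintype.card_pos
  nlinarith [(S.card.cast_nonneg : (0 : ℝ) ≤ S.card)]

theorem moranW_lt {r : ℝ} (hr : 1 < r) {S : Finset V} (hS : S ≠ univ) :
    moranW r S < r * Fintype.card V := by
  have hcard : S.card + 1 ≤ Fintype.card V := by
    rw [← card_univ]; exact card_lt_card (ssubset_univ_iff.2 hS)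
  have : (S.card : ℝ) + 1 ≤ Fintype.card V := by exact_mod_cast hcard
  rw [moranW_eq]; nlinarith

variable (G : SimpleGraph V) [DecidableRel G.Adj]

theorem moranPhi_nonneg (X : Finset V) : 0 ≤ moranPhi G X :=
  sum_nonneg fun _ _ => by positivity

theorem moranPhi_le_card (X : Finset V) : moranPhi G X ≤ X.card := by
  have := sum_le_card_nsmul X (fun x => (1 : ℝ) / G.degree x) 1 fun x _ => by
    rw [one_div]; exact Nat.cast_inv_le_one (G.degree x)
  simpa [moranPhi] using this

theorem sum_neighborFinset_comm (F : V → V → ℝ) :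
    ∑ x, ∑ y ∈ G.neighborFinset x, F x y = ∑ x, ∑ y ∈ G.neighborFinset x, F y x := by
  simp only [SimpleGraph.neighborFinset_eq_filter, sum_filter]
  rw [sum_comm]
  simp only [G.adj_comm]

variable [DecidableEq V]

theorem sum_fitness_eq_moranW (r : ℝ) (S : Finset V) :
    ∑ x : V, (if x ∈ S then r else 1) = moranW r S := by
  rw [sum_ite, filter_not, filter_mem_eq_inter, univ_inter, ← compl_eq_univ_sdiff, sum_const,
    sum_const, card_compl, nsmul_eq_mul, nsmul_eq_mul, Nat.cast_sub (card_le_univ S), moranW]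
  ring

theorem moranPhi_step (S : Finset V) (x y : V) :
    moranPhi G (if x ∈ S then insert y S else S.erase y) =
      moranPhi G S + (if x ∈ S ∧ y ∉ S then (1 : ℝ) / G.degree y else 0)
        - (if x ∉ S ∧ y ∈ S then (1 : ℝ) / G.degree y else 0) := by
  by_cases hx : x ∈ S <;> by_cases hy : y ∈ S <;>
    simp [moranPhi, hx, hy, sum_insert, sum_erase_eq_sub, add_comm]

noncomputable def cutWeight (S : Finset V) : ℝ :=
  ∑ x, ∑ y ∈ G.neighborFinset x,
    if x ∈ S ∧ y ∉ S then (1 : ℝ) / (G.degree x * G.degree y) else 0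

theorem one_div_sq_lt_cutWeight (hG : G.Connected) {S : Finset V} (hS0 : S.Nonempty)
    (hS1 : S ≠ univ) : 1 / (Fintype.card V : ℝ) ^ 2 < cutWeight G S := by
  obtain ⟨a, ha⟩ := hS0
  obtain ⟨b, hb⟩ : ∃ b, b ∉ S := by simpa [eq_univ_iff_forall] using hS1
  obtain ⟨d, -, hx, hy⟩ := (hG.preconnected a b).some.exists_boundary_dart (S : Set V) ha hb
  have hterm : ∀ x y : V,
      0 ≤ if x ∈ S ∧ y ∉ S then (1 : ℝ) / (G.degree x * G.degree y) else 0 :=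
    fun x y => by split <;> positivity
  have hdx : (0 : ℝ) < G.degree d.fst := by exact_mod_cast d.adj.degree_pos_left
  have hdy : (0 : ℝ) < G.degree d.snd := by exact_mod_cast d.adj.degree_pos_right
  have hdxn : (G.degree d.fst : ℝ) < Fintype.card V := by
    exact_mod_cast G.degree_lt_card_verts _
  have hdyn : (G.degree d.snd : ℝ) < Fintype.card V := by
    exact_mod_cast G.degree_lt_card_verts _
  calc 1 / (Fintype.card V : ℝ) ^ 2 < 1 / (G.degree d.fst * G.degree d.snd) :=
        one_div_lt_one_div_of_lt (by positivity) (by rw [sq]; gcongr)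
    _ = if d.fst ∈ S ∧ d.snd ∉ S then (1 : ℝ) / (G.degree d.fst * G.degree d.snd) else 0 :=
        (if_pos ⟨hx, hy⟩).symm
    _ ≤ ∑ y ∈ G.neighborFinset d.fst,
          if d.fst ∈ S ∧ y ∉ S then (1 : ℝ) / (G.degree d.fst * G.degree y) else 0 :=
        single_le_sum (fun y _ => hterm _ y) ((G.mem_neighborFinset _ _).2 d.adj)
    _ ≤ cutWeight G S :=
        single_le_sum (f := fun x => ∑ y ∈ G.neighborFinset x,
            if x ∈ S ∧ y ∉ S then (1 : ℝ) / (G.degree x * G.degree y) else 0)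
          (fun x _ => sum_nonneg fun y _ => hterm x y) (mem_univ _)

theorem sum_moranP_mul (r : ℝ) (S : Finset V) (f : Finset V → ℝ) :
    ∑ T, moranP G r S T * f T =
      ∑ x, ∑ y ∈ G.neighborFinset x,
        (if x ∈ S then r else 1) / (moranW r S * G.degree x) *
          f (if x ∈ S then insert y S else S.erase y) := by
  simp only [moranP, sum_mul]
  rw [sum_comm]
  refine sum_congr rfl fun x _ => ?_
  rw [sum_comm]
  refine sum_congr rfl fun y _ => ?_
  simp only [mul_assoc, ite_mul, one_mul, zero_mul, mul_ite, mul_zero, sum_ite_eq, mem_univ,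
    if_true]

theorem sum_selectionProb_eq_one (hdeg : ∀ x, 0 < G.degree x) {r : ℝ} {S : Finset V}
    (hW : moranW r S ≠ 0) :
    ∑ x, ∑ _y ∈ G.neighborFinset x,
      (if x ∈ S then r else 1) / (moranW r S * G.degree x) = 1 := by
  have hx : ∀ x, ∑ _y ∈ G.neighborFinset x,
      (if x ∈ S then r else 1) / (moranW r S * G.degree x) =
        (if x ∈ S then r else 1) / moranW r S := by
    intro x
    have : (G.degree x : ℝ) ≠ 0 := by exact_mod_cast (hdeg x).ne'
    rw [sum_const, G.card_neighborFinset_eq_degree, nsmul_eq_mul]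
    field_simp
  rw [sum_congr rfl fun x _ => hx x, ← sum_div, sum_fitness_eq_moranW, div_self hW]

theorem sum_moranP (hdeg : ∀ x, 0 < G.degree x) {r : ℝ} {S : Finset V} (hW : moranW r S ≠ 0) :
    ∑ T, moranP G r S T = 1 := by
  have := sum_moranP_mul G r S fun _ => 1
  simp only [mul_one] at this
  rw [this, sum_selectionProb_eq_one G hdeg hW]

theorem moranP_nonneg {r : ℝ} (hr : 0 ≤ r) (S T : Finset V) : 0 ≤ moranP G r S T := by
  have := moranW_nonneg hr S
  refine sum_nonneg fun x _ => sum_nonneg fun y _ => mul_nonneg (div_nonneg ?_ ?_) ?_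
  · split <;> positivity
  · positivity
  · split <;> positivity

theorem sum_moranP_mul_moranPhi (hdeg : ∀ x, 0 < G.degree x) {r : ℝ} {S : Finset V}
    (hW : moranW r S ≠ 0) :
    ∑ T, moranP G r S T * moranPhi G T = moranPhi G S + (r - 1) / moranW r S * cutWeight G S := by
  set b : V → V → ℝ := fun x y =>
    if x ∈ S ∧ y ∉ S then 1 / (G.degree x * G.degree y) else 0
  have hstep : ∀ x y, (if x ∈ S then r else 1) / (moranW r S * G.degree x) *
      moranPhi G (if x ∈ S then insert y S else S.erase y) =
      (if x ∈ S then r else 1) / (moranW r S * G.degree x) * moranPhi G S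
        + r / moranW r S * b x y - 1 / moranW r S * b y x := by
    intro x y
    rw [moranPhi_step]
    by_cases hx : x ∈ S <;> by_cases hy : y ∈ S <;> simp [b, hx, hy] <;> ring
  have hcut : ∑ x, ∑ y ∈ G.neighborFinset x, b x y = cutWeight G S := rfl
  have hswap : ∑ x, ∑ y ∈ G.neighborFinset x, b y x = cutWeight G S :=
    (sum_neighborFinset_comm G b).symm
  rw [sum_moranP_mul]
  simp only [hstep, sum_add_distrib, sum_sub_distrib, ← sum_mul]
  rw [sum_selectionProb_eq_one G hdeg hW]
  simp only [← mul_sum, hcut, hswap]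
  ring

theorem moranPhi_add_lt_sum_moranP_mul_moranPhi (hG : G.Connected) {r : ℝ} (hr : 1 < r)
    {S : Finset V} (hS0 : S.Nonempty) (hS1 : S ≠ univ) :
    moranPhi G S + (r - 1) / (r * Fintype.card V ^ 3) < ∑ T, moranP G r S T * moranPhi G T := by
  obtain ⟨a, ha⟩ := hS0
  obtain ⟨b, hb⟩ : ∃ b, b ∉ S := by simpa [eq_univ_iff_forall] using hS1
  have : Nontrivial V := ⟨a, b, ne_of_mem_of_not_mem ha hb⟩
  have hW := moranW_pos hr.le S
  rw [sum_moranP_mul_moranPhi G (fun x => hG.preconnected.degree_pos_of_nontrivial x) hW.ne']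
  have hn : (0 : ℝ) < Fintype.card V := by exact_mod_cast Fintype.card_pos
  have hsel : (r - 1) / (r * Fintype.card V) < (r - 1) / moranW r S :=
    div_lt_div_of_pos_left (sub_pos.2 hr) hW (moranW_lt hr hS1)
  have hcut := one_div_sq_lt_cutWeight G hG ⟨a, ha⟩ hS1
  have hsplit : (r - 1) / (r * Fintype.card V ^ 3) =
      (r - 1) / (r * Fintype.card V) * (1 / (Fintype.card V : ℝ) ^ 2) := by
    field_simp
  rw [hsplit]
  exact (add_lt_add_iff_left _).2
    (mul_lt_mul'' hsel hcut (div_nonneg (sub_nonneg.2 hr.le) (by positivity)) (by positivity))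

theorem moran_absorptionTime_le (hG : G.Connected) (hn : 2 ≤ Fintype.card V) {r : ℝ}
    (hr : 1 < r) {h : Finset V → ℝ} (habs0 : h ∅ = 0) (habs1 : h univ = 0)
    (hrec : ∀ S : Finset V, S ≠ ∅ → S ≠ univ → h S = 1 + ∑ T, moranP G r S T * h T)
    (S : Finset V) :
    h S ≤ r / (r - 1) * Fintype.card V ^ 3 * (moranPhi G univ - moranPhi G S) := by
  have : Nontrivial V := Fintype.one_lt_card_iff_nontrivial.1 hn
  have hrow : ∀ S, ∑ T, moranP G r S T = 1 := fun S =>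
    sum_moranP G (fun x => hG.preconnected.degree_pos_of_nontrivial x) (moranW_pos hr.le S).ne'
  have hk : 0 < (r - 1) / (r * Fintype.card V ^ 3) := div_pos (sub_pos.2 hr) (by positivity)
  have hkinv : r / (r - 1) * Fintype.card V ^ 3 = 1 / ((r - 1) / (r * Fintype.card V ^ 3)) := by
    have := sub_pos.2 hr
    field_simp
  rw [hkinv, one_div_mul_eq_div]
  refine le_div_of_drift (A := fun S => S = ∅ ∨ S = univ)
    (ψ := fun S => moranPhi G univ - moranPhi G S) hk
    (fun S _ T => moranP_nonneg G (by linarith) S T) (fun S _ => hrow S) ?_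
    (fun S hS => hrec S (not_or.1 hS).1 (not_or.1 hS).2) (fun S hS => ?_) S
  · rintro S (rfl | rfl)
    · simpa [habs0, moranPhi] using div_nonneg (moranPhi_nonneg G univ) hk.le
    · simp [habs1]
  · have := moranPhi_add_lt_sum_moranP_mul_moranPhi G hG hr
      (nonempty_iff_ne_empty.2 (not_or.1 hS).1) (not_or.1 hS).2
    simp only [mul_sub, sum_sub_distrib, ← sum_mul, hrow, one_mul]
    linarith

end Moran

theorem stmt_10_general {V : Type*} [Fintype V] [DecidableEq V] (G : SimpleGraph V)
    [DecidableRel G.Adj] (hG : G.Connected) (hn : 2 ≤ Fintype.card V)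
    (r : ℝ) (hr : 1 < r)
    (h : Finset V → ℝ)
    (habs0 : h ∅ = 0) (habs1 : h Finset.univ = 0)
    (hrec : ∀ S : Finset V, S ≠ ∅ → S ≠ Finset.univ →
      h S = 1 + ∑ T : Finset V, moranP G r S T * h T) :
    (1 / (Fintype.card V : ℝ)) * ∑ x : V, h {x} ≤
        (r / (r - 1)) * (Fintype.card V : ℝ) ^ 3 * moranPhi G Finset.univ ∧
    (r / (r - 1)) * (Fintype.card V : ℝ) ^ 3 * moranPhi G Finset.univ ≤
        (r / (r - 1)) * (Fintype.card V : ℝ) ^ 4 := by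
  set n : ℝ := (Fintype.card V : ℝ)
  have hn0 : 0 < n := by positivity
  have hc : 0 ≤ r / (r - 1) * n ^ 3 := by
    have := sub_pos.2 hr
    positivity
  have hsingle : ∀ x, h {x} ≤ r / (r - 1) * n ^ 3 * moranPhi G univ := fun x =>
    (moran_absorptionTime_le G hG hn hr habs0 habs1 hrec {x}).trans
      (by gcongr; linarith [moranPhi_nonneg G {x}])
  refine ⟨?_, ?_⟩
  · have := sum_le_card_nsmul univ (fun x => h {x}) _ fun x _ => hsingle x
    rw [card_univ, nsmul_eq_mul] at this
    rw [one_div_mul_eq_div, div_le_iff₀ hn0]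
    linarith
  · have hφ : moranPhi G univ ≤ n := by simpa using moranPhi_le_card G univ
    calc r / (r - 1) * n ^ 3 * moranPhi G univ ≤ r / (r - 1) * n ^ 3 * n := by gcongr
      _ = r / (r - 1) * n ^ 4 := by ring

/-- For a finite connected graph on `n ≥ 2` vertices and `r > 1`, the expected absorption
time of the Moran process with a uniformly random initial mutant is at most
`(r/(r-1))·n³·φ(G) ≤ (r/(r-1))·n⁴`, where `φ(G) = ∑_{x ∈ V} 1/deg x`. -/
theorem stmt_10 {V : Type*} [Fintype V] [DecidableEq V] (G : SimpleGraph V)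
    [DecidableRel G.Adj] (hG : G.Connected) (hn : 2 ≤ Fintype.card V)
    (r : ℝ) (hr : 1 < r)
    (h : Finset V → ℝ) (hpos : ∀ S, 0 ≤ h S)
    (habs0 : h ∅ = 0) (habs1 : h Finset.univ = 0)
    (hrec : ∀ S : Finset V, S ≠ ∅ → S ≠ Finset.univ →
      h S = 1 + ∑ T : Finset V, moranP G r S T * h T) :
    (1 / (Fintype.card V : ℝ)) * ∑ x : V, h {x} ≤
        (r / (r - 1)) * (Fintype.card V : ℝ) ^ 3 * moranPhi G Finset.univ ∧
    (r / (r - 1)) * (Fintype.card V : ℝ) ^ 3 * moranPhi G Finset.univ ≤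
        (r / (r - 1)) * (Fintype.card V : ℝ) ^ 4 :=
  stmt_10_general G hG hn r hr h habs0 habs1 hrec
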